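/- Let A and A* be densely defined operators on E = L²(ℝ, ℝ^d; ρ_{-2r}dx) which on C_0^∞(ℝ, ℝ^d) are given by Aφ = (1/2)(Δ_x − κ)φ and A*φ = Aφ − 2r χ'·φ' + (2r²(χ')² − r Δ_xχ)φ, where |χ'| ≤ 1. Then the graph norms of A and A* are equivalent on C_0^∞(ℝ, ℝ^d): ‖Aφ‖_E ≤ 2‖A*φ‖_E + (22r² + κ + r‖Δ_xχ‖_∞)‖φ‖_E and ‖A*φ‖_E ≤ (3/2)‖Aφ‖_E + (22r² + κ + r‖Δ_xχ‖_∞)‖φ‖_E. -/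

import Mathlib

open MeasureTheory
open scoped RealInnerProductSpace

lemma integral_deriv_eq_zero' {g : ℝ → ℝ} (hg : ContDiff ℝ 1 g) (hc : HasCompactSupport g) :
    ∫ x, deriv g x = 0 := by
  have hint : Integrable (deriv g) :=
    (hg.continuous_deriv le_rfl).integrable_of_hasCompactSupport hc.deriv
  have h1 := hc.integral_Iic_deriv_eq hg 0
  have h2 := hc.integral_Ioi_deriv_eq hg 0
  rw [← intervalIntegral.integral_Iic_add_Ioi (b := 0) hint.integrableOn hint.integrableOn,
    h1, h2]
  ring

lemma weighted_cauchy_schwarz {u v w : ℝ → ℝ} (hu : ∀ x, 0 ≤ u x) (hv : ∀ x, 0 ≤ v x)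
    (hw : ∀ x, 0 ≤ w x)
    (h1 : Integrable (fun x => u x ^ 2 * w x)) (h2 : Integrable (fun x => v x ^ 2 * w x))
    (h3 : Integrable (fun x => u x * v x * w x)) :
    ∫ x, u x * v x * w x ≤
      Real.sqrt (∫ x, u x ^ 2 * w x) * Real.sqrt (∫ x, v x ^ 2 * w x) := by
  have ha : 0 ≤ ∫ x, u x ^ 2 * w x := integral_nonneg fun x => mul_nonneg (sq_nonneg _) (hw x)
  have hc : 0 ≤ ∫ x, v x ^ 2 * w x := integral_nonneg fun x => mul_nonneg (sq_nonneg _) (hw x)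
  have hb : 0 ≤ ∫ x, u x * v x * w x :=
    integral_nonneg fun x => mul_nonneg (mul_nonneg (hu x) (hv x)) (hw x)
  set a := ∫ x, u x ^ 2 * w x
  set c := ∫ x, v x ^ 2 * w x
  set b := ∫ x, u x * v x * w x
  have key : ∀ t : ℝ, 0 ≤ a * (t * t) + (-2 * b) * t + c := by
    intro t
    have h4 : Integrable (fun x => t ^ 2 * (u x ^ 2 * w x)) := by exact h1.const_mul _
    have h5 : Integrable (fun x => 2 * t * (u x * v x * w x)) := by exact h3.const_mul _
    have h45 : Integrable (fun x => t ^ 2 * (u x ^ 2 * w x) - 2 * t * (u x * v x * w x)) := by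
      exact h4.sub h5
    have e : (fun x => (t * u x - v x) ^ 2 * w x) =
        fun x => (t ^ 2 * (u x ^ 2 * w x) - 2 * t * (u x * v x * w x)) + v x ^ 2 * w x :=
      funext fun x => by ring
    have hnn : 0 ≤ ∫ x, (t * u x - v x) ^ 2 * w x :=
      integral_nonneg fun x => mul_nonneg (sq_nonneg _) (hw x)
    have hval : ∫ x, (t * u x - v x) ^ 2 * w x = t ^ 2 * a - 2 * t * b + c := by
      rw [e, integral_add h45 h2, integral_sub h4 h5, integral_const_mul, integral_const_mul]
    nlinarith [hnn, hval]
  have hd := discrim_le_zero key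
  rw [discrim] at hd
  have hb2 : b ^ 2 ≤ a * c := by nlinarith [hd]
  calc b = Real.sqrt (b ^ 2) := (Real.sqrt_sq hb).symm
    _ ≤ Real.sqrt (a * c) := Real.sqrt_le_sqrt hb2
    _ = Real.sqrt a * Real.sqrt c := Real.sqrt_mul ha c

lemma weighted_L2_triangle3 {f u v z W : ℝ → ℝ}
    (hf : ∀ x, 0 ≤ f x) (hu : ∀ x, 0 ≤ u x) (hv : ∀ x, 0 ≤ v x) (hz : ∀ x, 0 ≤ z x)
    (hW : ∀ x, 0 ≤ W x)
    (hpt : ∀ x, f x ≤ u x + v x + z x)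
    (hif : Integrable (fun x => f x ^ 2 * W x))
    (hiu : Integrable (fun x => u x ^ 2 * W x))
    (hiv : Integrable (fun x => v x ^ 2 * W x))
    (hiz : Integrable (fun x => z x ^ 2 * W x))
    (hiuv : Integrable (fun x => u x * v x * W x))
    (hiuz : Integrable (fun x => u x * z x * W x))
    (hivz : Integrable (fun x => v x * z x * W x)) :
    Real.sqrt (∫ x, f x ^ 2 * W x) ≤
      Real.sqrt (∫ x, u x ^ 2 * W x) + Real.sqrt (∫ x, v x ^ 2 * W x) +
        Real.sqrt (∫ x, z x ^ 2 * W x) := by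
  have c1 := weighted_cauchy_schwarz hu hv hW hiu hiv hiuv
  have c2 := weighted_cauchy_schwarz hu hz hW hiu hiz hiuz
  have c3 := weighted_cauchy_schwarz hv hz hW hiv hiz hivz
  have hp2 : Real.sqrt (∫ x, u x ^ 2 * W x) ^ 2 = ∫ x, u x ^ 2 * W x :=
    Real.sq_sqrt (integral_nonneg fun x => mul_nonneg (sq_nonneg _) (hW x))
  have hq2 : Real.sqrt (∫ x, v x ^ 2 * W x) ^ 2 = ∫ x, v x ^ 2 * W x :=
    Real.sq_sqrt (integral_nonneg fun x => mul_nonneg (sq_nonneg _) (hW x))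
  have ht2 : Real.sqrt (∫ x, z x ^ 2 * W x) ^ 2 = ∫ x, z x ^ 2 * W x :=
    Real.sq_sqrt (integral_nonneg fun x => mul_nonneg (sq_nonneg _) (hW x))
  set p := Real.sqrt (∫ x, u x ^ 2 * W x)
  set q := Real.sqrt (∫ x, v x ^ 2 * W x)
  set t := Real.sqrt (∫ x, z x ^ 2 * W x)
  have hpn : 0 ≤ p := Real.sqrt_nonneg _
  have hqn : 0 ≤ q := Real.sqrt_nonneg _
  have htn : 0 ≤ t := Real.sqrt_nonneg _
  have i1 : Integrable (fun x => u x ^ 2 * W x + v x ^ 2 * W x) := by exact hiu.add hiv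
  have i2 : Integrable (fun x => u x ^ 2 * W x + v x ^ 2 * W x + z x ^ 2 * W x) := by
    exact i1.add hiz
  have i3 : Integrable (fun x => 2 * (u x * v x * W x)) := by exact hiuv.const_mul 2
  have i4 : Integrable (fun x => 2 * (u x * z x * W x)) := by exact hiuz.const_mul 2
  have i5 : Integrable (fun x => 2 * (v x * z x * W x)) := by exact hivz.const_mul 2
  have i34 : Integrable (fun x => 2 * (u x * v x * W x) + 2 * (u x * z x * W x)) := by
    exact i3.add i4
  have i345 : Integrable
      (fun x => 2 * (u x * v x * W x) + 2 * (u x * z x * W x) + 2 * (v x * z x * W x)) := by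
    exact i34.add i5
  have e : (fun x => (u x + v x + z x) ^ 2 * W x) =
      fun x => (u x ^ 2 * W x + v x ^ 2 * W x + z x ^ 2 * W x) +
        (2 * (u x * v x * W x) + 2 * (u x * z x * W x) + 2 * (v x * z x * W x)) :=
    funext fun x => by ring
  have hisum : Integrable (fun x => (u x + v x + z x) ^ 2 * W x) := by
    rw [e]; exact i2.add i345
  have hm : (∫ x, f x ^ 2 * W x) ≤ ∫ x, (u x + v x + z x) ^ 2 * W x := by
    refine integral_mono hif hisum fun x => ?_
    exact mul_le_mul_of_nonneg_right (by nlinarith [hpt x, hf x]) (hW x)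
  have hexp : (∫ x, (u x + v x + z x) ^ 2 * W x) =
      ((∫ x, u x ^ 2 * W x) + (∫ x, v x ^ 2 * W x) + ∫ x, z x ^ 2 * W x) +
        (2 * (∫ x, u x * v x * W x) + 2 * (∫ x, u x * z x * W x) +
          2 * ∫ x, v x * z x * W x) := by
    rw [e, integral_add i2 i345, integral_add i1 hiz, integral_add hiu hiv,
      integral_add i34 i5, integral_add i3 i4,
      integral_const_mul, integral_const_mul, integral_const_mul]
  have hfin : (∫ x, f x ^ 2 * W x) ≤ (p + q + t) ^ 2 := by
    nlinarith [hm, hexp, c1, c2, c3, hp2, hq2, ht2, mul_nonneg hpn hqn, mul_nonneg hpn htn,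
      mul_nonneg hqn htn]
  calc Real.sqrt (∫ x, f x ^ 2 * W x) ≤ Real.sqrt ((p + q + t) ^ 2) := Real.sqrt_le_sqrt hfin
    _ = p + q + t := Real.sqrt_sq (by positivity)

lemma weighted_L2_triangle3' {f u v z W : ℝ → ℝ} {c1 c2 : ℝ} (hc1 : 0 ≤ c1) (hc2 : 0 ≤ c2)
    (hf : ∀ x, 0 ≤ f x) (hu : ∀ x, 0 ≤ u x) (hv : ∀ x, 0 ≤ v x) (hz : ∀ x, 0 ≤ z x)
    (hW : ∀ x, 0 ≤ W x)
    (hpt : ∀ x, f x ≤ u x + c1 * v x + c2 * z x)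
    (hif : Integrable (fun x => f x ^ 2 * W x))
    (hiu : Integrable (fun x => u x ^ 2 * W x))
    (hiv : Integrable (fun x => v x ^ 2 * W x))
    (hiz : Integrable (fun x => z x ^ 2 * W x))
    (hiuv : Integrable (fun x => u x * v x * W x))
    (hiuz : Integrable (fun x => u x * z x * W x))
    (hivz : Integrable (fun x => v x * z x * W x)) :
    Real.sqrt (∫ x, f x ^ 2 * W x) ≤
      Real.sqrt (∫ x, u x ^ 2 * W x) + c1 * Real.sqrt (∫ x, v x ^ 2 * W x) +
        c2 * Real.sqrt (∫ x, z x ^ 2 * W x) := by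
  have hv' : ∀ x, 0 ≤ c1 * v x := fun x => mul_nonneg hc1 (hv x)
  have hz' : ∀ x, 0 ≤ c2 * z x := fun x => mul_nonneg hc2 (hz x)
  have ev : (fun x => (c1 * v x) ^ 2 * W x) = fun x => c1 ^ 2 * (v x ^ 2 * W x) :=
    funext fun x => by ring
  have ez : (fun x => (c2 * z x) ^ 2 * W x) = fun x => c2 ^ 2 * (z x ^ 2 * W x) :=
    funext fun x => by ring
  have hiv2 : Integrable (fun x => (c1 * v x) ^ 2 * W x) := by rw [ev]; exact hiv.const_mul _
  have hiz2 : Integrable (fun x => (c2 * z x) ^ 2 * W x) := by rw [ez]; exact hiz.const_mul _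
  have euv : (fun x => u x * (c1 * v x) * W x) = fun x => c1 * (u x * v x * W x) :=
    funext fun x => by ring
  have euz : (fun x => u x * (c2 * z x) * W x) = fun x => c2 * (u x * z x * W x) :=
    funext fun x => by ring
  have evz : (fun x => (c1 * v x) * (c2 * z x) * W x) =
      fun x => (c1 * c2) * (v x * z x * W x) := funext fun x => by ring
  have hiuv2 : Integrable (fun x => u x * (c1 * v x) * W x) := by
    rw [euv]; exact hiuv.const_mul _
  have hiuz2 : Integrable (fun x => u x * (c2 * z x) * W x) := by
    rw [euz]; exact hiuz.const_mul _
  have hivz2 : Integrable (fun x => (c1 * v x) * (c2 * z x) * W x) := by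
    rw [evz]; exact hivz.const_mul _
  have base := weighted_L2_triangle3 hf hu hv' hz' hW hpt hif hiu hiv2 hiz2 hiuv2 hiuz2 hivz2
  rw [ev, ez, integral_const_mul, integral_const_mul, Real.sqrt_mul (sq_nonneg c1),
    Real.sqrt_mul (sq_nonneg c2), Real.sqrt_sq hc1, Real.sqrt_sq hc2] at base
  exact base

set_option maxHeartbeats 2000000
/-- Equivalence of the graph norms of `A` and `A*` on `C₀^∞(ℝ, ℝ^d)` in the weighted space
`E = L²(ℝ, ℝ^d; ρ_{-2r} dx)`, where `Aφ = (1/2)(Δφ - κφ)` and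
`A*φ = Aφ - 2r χ'·φ' + (2r²(χ')² - r χ'')φ`. -/
theorem graph_norms_A_Astar_equivalent {d : ℕ}
    (r κ Cχ : ℝ) (hr : 0 < r) (hκ : 0 < κ)
    (χ : ℝ → ℝ) (hχ_smooth : ContDiff ℝ (⊤ : ℕ∞) χ) (hχ_pos : ∀ x, 0 < χ x)
    (hχ_symm : ∀ x, χ (-x) = χ x) (hχ_conv : ConvexOn ℝ Set.univ χ)
    (hχ_eq : ∀ x : ℝ, 1 ≤ |x| → χ x = |x|)
    (hχ_deriv : ∀ x, |deriv χ x| ≤ 1)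
    (hχ_deriv2 : ∀ x, |deriv (deriv χ) x| ≤ Cχ)
    (A Astar : (ℝ → EuclideanSpace ℝ (Fin d)) → ℝ → EuclideanSpace ℝ (Fin d))
    (hA : ∀ φ x, A φ x = (1 / 2 : ℝ) • (deriv (deriv φ) x - κ • φ x))
    (hAstar : ∀ φ x, Astar φ x = A φ x - (2 * r * deriv χ x) • deriv φ x +
      (2 * r ^ 2 * (deriv χ x) ^ 2 - r * deriv (deriv χ) x) • φ x) :
    ∀ φ : ℝ → EuclideanSpace ℝ (Fin d),
      ContDiff ℝ (⊤ : ℕ∞) φ → HasCompactSupport φ →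
      (Real.sqrt (∫ x : ℝ, ‖A φ x‖ ^ 2 * Real.exp (-2 * r * χ x)) ≤
        2 * Real.sqrt (∫ x : ℝ, ‖Astar φ x‖ ^ 2 * Real.exp (-2 * r * χ x)) +
          (22 * r ^ 2 + κ + r * Cχ) *
            Real.sqrt (∫ x : ℝ, ‖φ x‖ ^ 2 * Real.exp (-2 * r * χ x))) ∧
      (Real.sqrt (∫ x : ℝ, ‖Astar φ x‖ ^ 2 * Real.exp (-2 * r * χ x)) ≤
        (3 / 2) * Real.sqrt (∫ x : ℝ, ‖A φ x‖ ^ 2 * Real.exp (-2 * r * χ x)) +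
          (22 * r ^ 2 + κ + r * Cχ) *
            Real.sqrt (∫ x : ℝ, ‖φ x‖ ^ 2 * Real.exp (-2 * r * χ x))) := by
  intro φ hφ hφc
  -- basic regularity
  have hφi : ContDiff ℝ (⊤ : ℕ∞) φ := hφ.of_le (by simp)
  have hχi : ContDiff ℝ (⊤ : ℕ∞) χ := hχ_smooth.of_le (by simp)
  have hφ'c : ContDiff ℝ (⊤ : ℕ∞) (deriv φ) := (contDiff_infty_iff_deriv.mp hφi).2
  have hφ''c : ContDiff ℝ (⊤ : ℕ∞) (deriv (deriv φ)) := (contDiff_infty_iff_deriv.mp hφ'c).2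
  have hχ'c : ContDiff ℝ (⊤ : ℕ∞) (deriv χ) := (contDiff_infty_iff_deriv.mp hχi).2
  have hχ''c : ContDiff ℝ (⊤ : ℕ∞) (deriv (deriv χ)) := (contDiff_infty_iff_deriv.mp hχ'c).2
  have hone : ((⊤ : ℕ∞) : WithTop ℕ∞) ≠ 0 := by simp
  have hφd : Differentiable ℝ φ := hφi.differentiable hone
  have hφ'd : Differentiable ℝ (deriv φ) := hφ'c.differentiable hone
  have hχd : Differentiable ℝ χ := hχi.differentiable hone
  have hχ'd : Differentiable ℝ (deriv χ) := hχ'c.differentiable hone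
  have cφ : Continuous φ := hφi.continuous
  have cφ' : Continuous (deriv φ) := hφ'c.continuous
  have cφ'' : Continuous (deriv (deriv φ)) := hφ''c.continuous
  have cχ' : Continuous (deriv χ) := hχ'c.continuous
  have cχ'' : Continuous (deriv (deriv χ)) := hχ''c.continuous
  have cw : Continuous (fun x => Real.exp (-2 * r * χ x)) :=
    Real.continuous_exp.comp (continuous_const.mul hχi.continuous)
  have hwsm : ContDiff ℝ (⊤ : ℕ∞) (fun x => Real.exp (-2 * r * χ x)) :=
    (contDiff_const.mul hχi).exp
  have hw0 : ∀ x : ℝ, 0 ≤ Real.exp (-2 * r * χ x) := fun x => (Real.exp_pos _).le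
  have hCχ0 : 0 ≤ Cχ := le_trans (abs_nonneg _) (hχ_deriv2 0)
  -- support
  have hK : IsCompact (tsupport φ) := hφc
  have hKφ : ∀ x, x ∉ tsupport φ → φ x = 0 := fun _ hx => image_eq_zero_of_notMem_tsupport hx
  have hKφ' : ∀ x, x ∉ tsupport φ → deriv φ x = 0 := by
    intro x hx
    by_contra h
    exact hx (support_deriv_subset (by simpa [Function.mem_support] using h))
  have hsub : tsupport (deriv φ) ⊆ tsupport φ :=
    closure_minimal support_deriv_subset (isClosed_tsupport φ)
  have hKφ'' : ∀ x, x ∉ tsupport φ → deriv (deriv φ) x = 0 := by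
    intro x hx
    by_contra h
    exact hx (hsub (support_deriv_subset (by simpa [Function.mem_support] using h)))
  have hKA : ∀ x, x ∉ tsupport φ → A φ x = 0 := by
    intro x hx
    rw [hA φ x, hKφ'' x hx, hKφ x hx]
    simp
  have hKS : ∀ x, x ∉ tsupport φ → Astar φ x = 0 := by
    intro x hx
    rw [hAstar φ x, hKA x hx, hKφ' x hx, hKφ x hx]
    simp
  have cA : Continuous (A φ) := by
    have hAf : A φ = fun x => (1 / 2 : ℝ) • (deriv (deriv φ) x - κ • φ x) := funext (hA φ)
    rw [hAf]
    exact (cφ''.sub (cφ.const_smul κ)).const_smul (1 / 2 : ℝ)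
  have cS : Continuous (Astar φ) := by
    have hSf : Astar φ = fun x => A φ x - (2 * r * deriv χ x) • deriv φ x +
        (2 * r ^ 2 * (deriv χ x) ^ 2 - r * deriv (deriv χ) x) • φ x := funext (hAstar φ)
    rw [hSf]
    exact (cA.sub ((continuous_const.mul cχ').smul cφ')).add
      (((continuous_const.mul (cχ'.pow 2)).sub (continuous_const.mul cχ'')).smul cφ)
  -- master integrability
  have key_int : ∀ f : ℝ → ℝ, Continuous f → (∀ x, x ∉ tsupport φ → f x = 0) →
      Integrable f := fun f hf h0 =>
    hf.integrable_of_hasCompactSupport (HasCompactSupport.intro hK h0)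
  -- integrable integrands
  have iφ2 : Integrable (fun x => ‖φ x‖ ^ 2 * Real.exp (-2 * r * χ x)) :=
    key_int _ ((cφ.norm.pow 2).mul cw) (fun x hx => by rw [hKφ x hx]; simp)
  have iφ'2 : Integrable (fun x => ‖deriv φ x‖ ^ 2 * Real.exp (-2 * r * χ x)) :=
    key_int _ ((cφ'.norm.pow 2).mul cw) (fun x hx => by rw [hKφ' x hx]; simp)
  have iA2 : Integrable (fun x => ‖A φ x‖ ^ 2 * Real.exp (-2 * r * χ x)) :=
    key_int _ ((cA.norm.pow 2).mul cw) (fun x hx => by rw [hKA x hx]; simp)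
  have iS2 : Integrable (fun x => ‖Astar φ x‖ ^ 2 * Real.exp (-2 * r * χ x)) :=
    key_int _ ((cS.norm.pow 2).mul cw) (fun x hx => by rw [hKS x hx]; simp)
  have iφ'φ : Integrable (fun x => ‖deriv φ x‖ * ‖φ x‖ * Real.exp (-2 * r * χ x)) :=
    key_int _ ((cφ'.norm.mul cφ.norm).mul cw) (fun x hx => by rw [hKφ x hx]; simp)
  have iAφ : Integrable (fun x => ‖A φ x‖ * ‖φ x‖ * Real.exp (-2 * r * χ x)) :=
    key_int _ ((cA.norm.mul cφ.norm).mul cw) (fun x hx => by rw [hKφ x hx]; simp)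
  have iSφ : Integrable (fun x => ‖Astar φ x‖ * ‖φ x‖ * Real.exp (-2 * r * χ x)) :=
    key_int _ ((cS.norm.mul cφ.norm).mul cw) (fun x hx => by rw [hKφ x hx]; simp)
  have iAφ' : Integrable (fun x => ‖A φ x‖ * ‖deriv φ x‖ * Real.exp (-2 * r * χ x)) :=
    key_int _ ((cA.norm.mul cφ'.norm).mul cw) (fun x hx => by rw [hKφ' x hx]; simp)
  have iSφ' : Integrable (fun x => ‖Astar φ x‖ * ‖deriv φ x‖ * Real.exp (-2 * r * χ x)) :=
    key_int _ ((cS.norm.mul cφ'.norm).mul cw) (fun x hx => by rw [hKφ' x hx]; simp)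
  -- derivative of the weight
  have hwD : ∀ x, HasDerivAt (fun y => Real.exp (-2 * r * χ y))
      (-2 * r * deriv χ x * Real.exp (-2 * r * χ x)) x := by
    intro x
    have h1 : HasDerivAt (fun y => -2 * r * χ y) (-2 * r * deriv χ x) x :=
      (hχd x).hasDerivAt.const_mul _
    have h2 := h1.exp
    convert h2 using 1
    ring
  -- integration by parts identity, A version
  have ibpA : ∫ x, (‖deriv φ x‖ ^ 2 + ⟪deriv (deriv φ) x, φ x⟫ -
      2 * r * (deriv χ x * ⟪deriv φ x, φ x⟫)) * Real.exp (-2 * r * χ x) = 0 := by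
    have hgd : ∀ x, HasDerivAt (fun y => ⟪deriv φ y, φ y⟫ * Real.exp (-2 * r * χ y))
        ((‖deriv φ x‖ ^ 2 + ⟪deriv (deriv φ) x, φ x⟫ -
          2 * r * (deriv χ x * ⟪deriv φ x, φ x⟫)) * Real.exp (-2 * r * χ x)) x := by
      intro x
      have h1 : HasDerivAt (fun y => ⟪deriv φ y, φ y⟫)
          (⟪deriv φ x, deriv φ x⟫ + ⟪deriv (deriv φ) x, φ x⟫) x :=
        HasDerivAt.inner _ (hφ'd x).hasDerivAt (hφd x).hasDerivAt
      have h2 := h1.mul (hwD x)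
      refine h2.congr_deriv ?_
      rw [real_inner_self_eq_norm_sq]
      ring
    have hcd : ContDiff ℝ 1 (fun y => ⟪deriv φ y, φ y⟫ * Real.exp (-2 * r * χ y)) :=
      ((ContDiff.inner ℝ hφ'c hφi).mul hwsm).of_le (by exact_mod_cast le_top)
    have hsupp : HasCompactSupport (fun y => ⟪deriv φ y, φ y⟫ * Real.exp (-2 * r * χ y)) :=
      HasCompactSupport.intro hK fun x hx => by rw [hKφ x hx]; simp
    have h0 := integral_deriv_eq_zero' hcd hsupp
    rw [← h0]
    exact integral_congr_ae (Filter.Eventually.of_forall fun x => ((hgd x).deriv).symm)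
  -- integration by parts identity, A* version
  have ibpS : ∫ x, (‖deriv φ x‖ ^ 2 + 2 * ⟪Astar φ x, φ x⟫ + κ * ‖φ x‖ ^ 2 -
      2 * r * (deriv χ x * ⟪deriv φ x, φ x⟫)) * Real.exp (-2 * r * χ x) = 0 := by
    have hgd : ∀ x, HasDerivAt
        (fun y => (⟪deriv φ y, φ y⟫ - 2 * (r * deriv χ y * ⟪φ y, φ y⟫)) *
          Real.exp (-2 * r * χ y))
        ((‖deriv φ x‖ ^ 2 + 2 * ⟪Astar φ x, φ x⟫ + κ * ‖φ x‖ ^ 2 -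
          2 * r * (deriv χ x * ⟪deriv φ x, φ x⟫)) * Real.exp (-2 * r * χ x)) x := by
      intro x
      have h1 : HasDerivAt (fun y => ⟪deriv φ y, φ y⟫)
          (⟪deriv φ x, deriv φ x⟫ + ⟪deriv (deriv φ) x, φ x⟫) x :=
        HasDerivAt.inner _ (hφ'd x).hasDerivAt (hφd x).hasDerivAt
      have h2 : HasDerivAt (fun y => ⟪φ y, φ y⟫)
          (⟪φ x, deriv φ x⟫ + ⟪deriv φ x, φ x⟫) x :=
        HasDerivAt.inner _ (hφd x).hasDerivAt (hφd x).hasDerivAt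
      have h3 : HasDerivAt (fun y => r * deriv χ y) (r * deriv (deriv χ) x) x :=
        (hχ'd x).hasDerivAt.const_mul r
      have h4 := (h3.mul h2).const_mul (2 : ℝ)
      have h5 := (h1.sub h4).mul (hwD x)
      refine h5.congr_deriv ?_
      rw [hAstar φ x, hA φ x]
      simp only [inner_sub_left, inner_add_left, real_inner_smul_left,
        real_inner_self_eq_norm_sq, Pi.sub_apply, Pi.mul_apply]
      rw [real_inner_comm (φ x) (deriv φ x)]
      ring
    have hcd : ContDiff ℝ 1 (fun y => (⟪deriv φ y, φ y⟫ -
        2 * (r * deriv χ y * ⟪φ y, φ y⟫)) * Real.exp (-2 * r * χ y)) :=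
      (((ContDiff.inner ℝ hφ'c hφi).sub
        ((contDiff_const.mul ((contDiff_const.mul hχ'c).mul
          (ContDiff.inner ℝ hφi hφi))))).mul hwsm).of_le (by exact_mod_cast le_top)
    have hsupp : HasCompactSupport (fun y => (⟪deriv φ y, φ y⟫ -
        2 * (r * deriv χ y * ⟪φ y, φ y⟫)) * Real.exp (-2 * r * χ y)) :=
      HasCompactSupport.intro hK fun x hx => by rw [hKφ x hx]; simp
    have h0 := integral_deriv_eq_zero' hcd hsupp
    rw [← h0]
    exact integral_congr_ae (Filter.Eventually.of_forall fun x => ((hgd x).deriv).symm)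
  -- the interpolation estimate, for ψ = A φ or ψ = A* φ
  have interp : ∀ ψ : ℝ → EuclideanSpace ℝ (Fin d), Continuous ψ →
      (∀ x, x ∉ tsupport φ → ψ x = 0) →
      ((∫ x, ‖deriv φ x‖ ^ 2 * Real.exp (-2 * r * χ x)) =
        ∫ x, (-(2 * ⟪ψ x, φ x⟫) - κ * ‖φ x‖ ^ 2 +
          2 * r * (deriv χ x * ⟪deriv φ x, φ x⟫)) * Real.exp (-2 * r * χ x)) →
      Real.sqrt (∫ x, ‖deriv φ x‖ ^ 2 * Real.exp (-2 * r * χ x)) ^ 2 ≤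
        2 * (Real.sqrt (∫ x, ‖ψ x‖ ^ 2 * Real.exp (-2 * r * χ x)) *
          Real.sqrt (∫ x, ‖φ x‖ ^ 2 * Real.exp (-2 * r * χ x))) +
        2 * r * (Real.sqrt (∫ x, ‖deriv φ x‖ ^ 2 * Real.exp (-2 * r * χ x)) *
          Real.sqrt (∫ x, ‖φ x‖ ^ 2 * Real.exp (-2 * r * χ x))) := by
    intro ψ cψ hKψ he
    have iψ2 : Integrable (fun x => ‖ψ x‖ ^ 2 * Real.exp (-2 * r * χ x)) :=
      key_int _ ((cψ.norm.pow 2).mul cw) (fun x hx => by rw [hKψ x hx]; simp)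
    have iψφ : Integrable (fun x => ‖ψ x‖ * ‖φ x‖ * Real.exp (-2 * r * χ x)) :=
      key_int _ ((cψ.norm.mul cφ.norm).mul cw) (fun x hx => by rw [hKψ x hx]; simp)
    have iL : Integrable (fun x => (-(2 * ⟪ψ x, φ x⟫) - κ * ‖φ x‖ ^ 2 +
        2 * r * (deriv χ x * ⟪deriv φ x, φ x⟫)) * Real.exp (-2 * r * χ x)) :=
      key_int _
        ((((continuous_const.mul (cψ.inner cφ)).neg.sub
            (continuous_const.mul (cφ.norm.pow 2))).add
          (continuous_const.mul (cχ'.mul (cφ'.inner cφ)))).mul cw)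
        (fun x hx => by rw [hKφ x hx]; simp)
    have j1 : Integrable (fun x => 2 * (‖ψ x‖ * ‖φ x‖ * Real.exp (-2 * r * χ x))) := by
      exact iψφ.const_mul 2
    have j2 : Integrable
        (fun x => 2 * r * (‖deriv φ x‖ * ‖φ x‖ * Real.exp (-2 * r * χ x))) := by
      exact iφ'φ.const_mul _
    have jsum : Integrable (fun x => 2 * (‖ψ x‖ * ‖φ x‖ * Real.exp (-2 * r * χ x)) +
        2 * r * (‖deriv φ x‖ * ‖φ x‖ * Real.exp (-2 * r * χ x))) := by
      exact j1.add j2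
    have hmono : (∫ x, (-(2 * ⟪ψ x, φ x⟫) - κ * ‖φ x‖ ^ 2 +
        2 * r * (deriv χ x * ⟪deriv φ x, φ x⟫)) * Real.exp (-2 * r * χ x)) ≤
        ∫ x, (2 * (‖ψ x‖ * ‖φ x‖ * Real.exp (-2 * r * χ x)) +
          2 * r * (‖deriv φ x‖ * ‖φ x‖ * Real.exp (-2 * r * χ x))) := by
      refine integral_mono iL jsum fun x => ?_
      have h1 := abs_real_inner_le_norm (ψ x) (φ x)
      have e1 : -(⟪ψ x, φ x⟫) ≤ ‖ψ x‖ * ‖φ x‖ := by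
        have := neg_abs_le ⟪ψ x, φ x⟫
        linarith
      have e2 : deriv χ x * ⟪deriv φ x, φ x⟫ ≤ ‖deriv φ x‖ * ‖φ x‖ := by
        calc deriv χ x * ⟪deriv φ x, φ x⟫ ≤ |deriv χ x * ⟪deriv φ x, φ x⟫| :=
              le_abs_self _
          _ = |deriv χ x| * |⟪deriv φ x, φ x⟫| := abs_mul _ _
          _ ≤ 1 * (‖deriv φ x‖ * ‖φ x‖) :=
              mul_le_mul (hχ_deriv x) (abs_real_inner_le_norm _ _) (abs_nonneg _) zero_le_one
          _ = ‖deriv φ x‖ * ‖φ x‖ := one_mul _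
      have e3 : 0 ≤ κ * ‖φ x‖ ^ 2 := mul_nonneg hκ.le (sq_nonneg _)
      have e4 := mul_le_mul_of_nonneg_left e2 (by positivity : (0 : ℝ) ≤ 2 * r)
      have bracket : -(2 * ⟪ψ x, φ x⟫) - κ * ‖φ x‖ ^ 2 +
          2 * r * (deriv χ x * ⟪deriv φ x, φ x⟫) ≤
          2 * (‖ψ x‖ * ‖φ x‖) + 2 * r * (‖deriv φ x‖ * ‖φ x‖) := by linarith
      calc (-(2 * ⟪ψ x, φ x⟫) - κ * ‖φ x‖ ^ 2 +
          2 * r * (deriv χ x * ⟪deriv φ x, φ x⟫)) * Real.exp (-2 * r * χ x) ≤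
          (2 * (‖ψ x‖ * ‖φ x‖) + 2 * r * (‖deriv φ x‖ * ‖φ x‖)) * Real.exp (-2 * r * χ x) :=
            mul_le_mul_of_nonneg_right bracket (hw0 x)
        _ = 2 * (‖ψ x‖ * ‖φ x‖ * Real.exp (-2 * r * χ x)) +
            2 * r * (‖deriv φ x‖ * ‖φ x‖ * Real.exp (-2 * r * χ x)) := by ring
    have hsplit : (∫ x, (2 * (‖ψ x‖ * ‖φ x‖ * Real.exp (-2 * r * χ x)) +
        2 * r * (‖deriv φ x‖ * ‖φ x‖ * Real.exp (-2 * r * χ x)))) =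
        2 * (∫ x, ‖ψ x‖ * ‖φ x‖ * Real.exp (-2 * r * χ x)) +
        2 * r * ∫ x, ‖deriv φ x‖ * ‖φ x‖ * Real.exp (-2 * r * χ x) := by
      rw [integral_add j1 j2, integral_const_mul, integral_const_mul]
    have cs1 := weighted_cauchy_schwarz (fun x => norm_nonneg (ψ x))
      (fun x => norm_nonneg (φ x)) hw0 iψ2 iφ2 iψφ
    have cs2 := weighted_cauchy_schwarz (fun x => norm_nonneg (deriv φ x))
      (fun x => norm_nonneg (φ x)) hw0 iφ'2 iφ2 iφ'φ
    have hbsq : Real.sqrt (∫ x, ‖deriv φ x‖ ^ 2 * Real.exp (-2 * r * χ x)) ^ 2 =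
        ∫ x, ‖deriv φ x‖ ^ 2 * Real.exp (-2 * r * χ x) :=
      Real.sq_sqrt (integral_nonneg fun x => mul_nonneg (sq_nonneg _) (hw0 x))
    have h2r : (0 : ℝ) ≤ 2 * r := by positivity
    have cs2' := mul_le_mul_of_nonneg_left cs2 h2r
    calc Real.sqrt (∫ x, ‖deriv φ x‖ ^ 2 * Real.exp (-2 * r * χ x)) ^ 2 =
        ∫ x, ‖deriv φ x‖ ^ 2 * Real.exp (-2 * r * χ x) := hbsq
      _ = ∫ x, (-(2 * ⟪ψ x, φ x⟫) - κ * ‖φ x‖ ^ 2 +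
          2 * r * (deriv χ x * ⟪deriv φ x, φ x⟫)) * Real.exp (-2 * r * χ x) := he
      _ ≤ _ := by
          rw [hsplit] at hmono
          linarith [cs1, cs2', hmono]
  -- pointwise inner-product identity for A
  have hid : ∀ x, ⟪deriv (deriv φ) x, φ x⟫ = 2 * ⟪A φ x, φ x⟫ + κ * ‖φ x‖ ^ 2 := by
    intro x
    rw [hA φ x]
    simp only [real_inner_smul_left, inner_sub_left, real_inner_self_eq_norm_sq]
    ring
  -- the two identities feeding the interpolation
  have eA : (∫ x, ‖deriv φ x‖ ^ 2 * Real.exp (-2 * r * χ x)) =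
      ∫ x, (-(2 * ⟪A φ x, φ x⟫) - κ * ‖φ x‖ ^ 2 +
        2 * r * (deriv χ x * ⟪deriv φ x, φ x⟫)) * Real.exp (-2 * r * χ x) := by
    have iDA : Integrable (fun x => (‖deriv φ x‖ ^ 2 + ⟪deriv (deriv φ) x, φ x⟫ -
        2 * r * (deriv χ x * ⟪deriv φ x, φ x⟫)) * Real.exp (-2 * r * χ x)) :=
      key_int _
        ((((cφ'.norm.pow 2).add (cφ''.inner cφ)).sub
          (continuous_const.mul (cχ'.mul (cφ'.inner cφ)))).mul cw)
        (fun x hx => by rw [hKφ x hx, hKφ' x hx]; simp)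
    rw [← sub_zero (∫ x, ‖deriv φ x‖ ^ 2 * Real.exp (-2 * r * χ x)), ← ibpA,
      ← integral_sub iφ'2 iDA]
    refine integral_congr_ae (Filter.Eventually.of_forall fun x => ?_)
    beta_reduce
    rw [hid x]
    ring
  have eS : (∫ x, ‖deriv φ x‖ ^ 2 * Real.exp (-2 * r * χ x)) =
      ∫ x, (-(2 * ⟪Astar φ x, φ x⟫) - κ * ‖φ x‖ ^ 2 +
        2 * r * (deriv χ x * ⟪deriv φ x, φ x⟫)) * Real.exp (-2 * r * χ x) := by
    have iDS : Integrable (fun x => (‖deriv φ x‖ ^ 2 + 2 * ⟪Astar φ x, φ x⟫ +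
        κ * ‖φ x‖ ^ 2 - 2 * r * (deriv χ x * ⟪deriv φ x, φ x⟫)) *
        Real.exp (-2 * r * χ x)) :=
      key_int _
        ((((((cφ'.norm.pow 2).add (continuous_const.mul (cS.inner cφ))).add
          (continuous_const.mul (cφ.norm.pow 2))).sub
          (continuous_const.mul (cχ'.mul (cφ'.inner cφ)))).mul cw))
        (fun x hx => by rw [hKφ x hx, hKφ' x hx]; simp)
    rw [← sub_zero (∫ x, ‖deriv φ x‖ ^ 2 * Real.exp (-2 * r * χ x)), ← ibpS,
      ← integral_sub iφ'2 iDS]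
    exact integral_congr_ae (Filter.Eventually.of_forall fun x => by ring)
  have F2 := interp (A φ) cA hKA eA
  have F1 := interp (Astar φ) cS hKS eS
  -- pointwise comparison of A and A*
  have n1 : ∀ x, ‖(2 * r * deriv χ x) • deriv φ x‖ ≤ 2 * r * ‖deriv φ x‖ := by
    intro x
    rw [norm_smul, Real.norm_eq_abs]
    refine mul_le_mul_of_nonneg_right ?_ (norm_nonneg _)
    rw [abs_mul]
    calc |2 * r| * |deriv χ x| ≤ |2 * r| * 1 :=
          mul_le_mul_of_nonneg_left (hχ_deriv x) (abs_nonneg _)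
      _ = 2 * r := by rw [mul_one, abs_of_pos (by positivity)]
  have n2 : ∀ x, ‖(2 * r ^ 2 * (deriv χ x) ^ 2 - r * deriv (deriv χ) x) • φ x‖ ≤
      (2 * r ^ 2 + r * Cχ) * ‖φ x‖ := by
    intro x
    rw [norm_smul, Real.norm_eq_abs]
    refine mul_le_mul_of_nonneg_right ?_ (norm_nonneg _)
    have h1 := abs_le.mp (hχ_deriv x)
    have h2 := abs_le.mp (hχ_deriv2 x)
    rw [abs_le]
    constructor <;> nlinarith [sq_nonneg (deriv χ x), hr.le, h1.1, h1.2, h2.1, h2.2,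
      mul_nonneg (sub_nonneg.mpr h1.2) (sub_nonneg.mpr (neg_le_iff_add_nonneg.mp h1.1))]
  have pt3 : ∀ x, ‖Astar φ x‖ ≤ ‖A φ x‖ + 2 * r * ‖deriv φ x‖ +
      (2 * r ^ 2 + r * Cχ) * ‖φ x‖ := by
    intro x
    rw [hAstar φ x]
    refine le_trans (norm_add_le _ _) ?_
    have h := norm_sub_le (A φ x) ((2 * r * deriv χ x) • deriv φ x)
    linarith [n1 x, n2 x, h]
  have pt4 : ∀ x, ‖A φ x‖ ≤ ‖Astar φ x‖ + 2 * r * ‖deriv φ x‖ +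
      (2 * r ^ 2 + r * Cχ) * ‖φ x‖ := by
    intro x
    have hrearr : A φ x = Astar φ x + (2 * r * deriv χ x) • deriv φ x -
        (2 * r ^ 2 * (deriv χ x) ^ 2 - r * deriv (deriv χ) x) • φ x := by
      rw [hAstar φ x]; abel
    rw [hrearr]
    refine le_trans (norm_sub_le _ _) ?_
    have h := norm_add_le (Astar φ x) ((2 * r * deriv χ x) • deriv φ x)
    linarith [n1 x, n2 x, h]
  have F3 := weighted_L2_triangle3' (c1 := 2 * r) (c2 := 2 * r ^ 2 + r * Cχ)
    (by positivity) (by positivity)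
    (fun x => norm_nonneg (Astar φ x)) (fun x => norm_nonneg (A φ x))
    (fun x => norm_nonneg (deriv φ x)) (fun x => norm_nonneg (φ x)) hw0 pt3
    iS2 iA2 iφ'2 iφ2 iAφ' iAφ iφ'φ
  have F4 := weighted_L2_triangle3' (c1 := 2 * r) (c2 := 2 * r ^ 2 + r * Cχ)
    (by positivity) (by positivity)
    (fun x => norm_nonneg (A φ x)) (fun x => norm_nonneg (Astar φ x))
    (fun x => norm_nonneg (deriv φ x)) (fun x => norm_nonneg (φ x)) hw0 pt4
    iA2 iS2 iφ'2 iφ2 iSφ' iSφ iφ'φ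
  -- final arithmetic
  have ha : 0 ≤ Real.sqrt (∫ x, ‖φ x‖ ^ 2 * Real.exp (-2 * r * χ x)) := Real.sqrt_nonneg _
  have hb : 0 ≤ Real.sqrt (∫ x, ‖deriv φ x‖ ^ 2 * Real.exp (-2 * r * χ x)) :=
    Real.sqrt_nonneg _
  have hcn : 0 ≤ Real.sqrt (∫ x, ‖A φ x‖ ^ 2 * Real.exp (-2 * r * χ x)) := Real.sqrt_nonneg _
  have hsn : 0 ≤ Real.sqrt (∫ x, ‖Astar φ x‖ ^ 2 * Real.exp (-2 * r * χ x)) :=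
    Real.sqrt_nonneg _
  set a := Real.sqrt (∫ x, ‖φ x‖ ^ 2 * Real.exp (-2 * r * χ x)) with hadef
  set b := Real.sqrt (∫ x, ‖deriv φ x‖ ^ 2 * Real.exp (-2 * r * χ x)) with hbdef
  set c := Real.sqrt (∫ x, ‖A φ x‖ ^ 2 * Real.exp (-2 * r * χ x)) with hcdef
  set s := Real.sqrt (∫ x, ‖Astar φ x‖ ^ 2 * Real.exp (-2 * r * χ x)) with hsdef
  have V1 : 2 * r * b ≤ s + 6 * r ^ 2 * a := by
    nlinarith [F1, sq_nonneg (2 * r * b - s - 6 * r ^ 2 * a), mul_nonneg hsn ha,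
      mul_nonneg (mul_nonneg hr.le hr.le) ha, mul_nonneg hb ha, sq_nonneg s,
      sq_nonneg (r ^ 2 * a), mul_nonneg (mul_nonneg hr.le hr.le) (mul_nonneg hb ha),
      mul_nonneg hsn hb, mul_nonneg hsn (mul_nonneg hr.le hb)]
  have V2 : 8 * r * b ≤ c + 48 * r ^ 2 * a := by
    nlinarith [mul_nonneg (sq_nonneg r) (sub_nonneg.2 F2), sq_nonneg (c - 24 * r ^ 2 * a),
      sq_nonneg (r ^ 2 * a), hcn, mul_nonneg (mul_nonneg hr.le hr.le) ha,
      mul_nonneg hr.le hb, mul_nonneg hb ha, mul_nonneg hcn hb]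
  have h14 : 0 ≤ (14 * r ^ 2 + κ) * a := by positivity
  have h8 : 0 ≤ (8 * r ^ 2 + κ) * a := by positivity
  constructor
  · nlinarith [F4, V1, h14]
  · nlinarith [F3, V2, h8, hcn]
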